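/- For any constant 0 < ε ≤ 1/8 and positive integers n, k, there exists an (εnk, εk)-block-rigid matrix A ∈ F^{nk×nk} over any finite field F. -/

import Mathlib

/-!
A counting argument. If `A = B + C` with `rank B ≤ nk/8` and at most `k/8` non-zero blocks in
each block-row of `C`, then `B = P * Q` with inner dimension `nk/8`, and `C` is determined by
choosing, in each block-row, a set of at most `k/8` block-columns and the entries of those blocks.
Over a field with `q` elements this leaves at most `q^((nk)²/4) * (S * q^(n²k/8))^k` candidates,
where `S` is the number of subsets of size at most `k/8` of the `k` block-columns. Comparing
`S * 7^(7k/8)` with `∑_T 7^(k - #T) = 8^k` gives `S^8 < 2^(5k)`, so there are fewer than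
`q^((nk)²)` candidates and some matrix is not of this form.
-/

/-- `(r, s)`-block-rigidity: the matrix `A ∈ F^{nk×nk}`, viewed as a `k × k` block matrix
with `n × n` blocks (rows/columns indexed by `Fin k × Fin n`), cannot be written as
`B + C` with `rank B ≤ r` and `C` having at most `s` non-zero blocks in each block-row. -/
def IsBlockRigidMatrix {F : Type*} [Field F] [DecidableEq F] {n k : ℕ}
    (A : Matrix (Fin k × Fin n) (Fin k × Fin n) F) (r s : ℝ) : Prop :=
  ¬ ∃ B C : Matrix (Fin k × Fin n) (Fin k × Fin n) F, A = B + C ∧ (B.rank : ℝ) ≤ r ∧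
      ∀ i : Fin k,
        ((Finset.univ.filter fun j : Fin k => ∃ a b, C (i, a) (j, b) ≠ 0).card : ℝ) ≤ s

open Finset Matrix

namespace Matrix

variable {F m n : Type*} [Field F] [Fintype n]

theorem exists_eq_mul_rank (B : Matrix m n F) :
    ∃ (P : Matrix m (Fin B.rank) F) (Q : Matrix (Fin B.rank) n F), B = P * Q := by
  let V := Submodule.span F (Set.range B.col)
  have : FiniteDimensional F V := FiniteDimensional.span_of_finite F (Set.finite_range _)
  have hcol (j : n) : B.col j ∈ V := Submodule.subset_span ⟨j, rfl⟩
  let b : Module.Basis (Fin B.rank) F V :=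
    Module.finBasisOfFinrankEq F V B.rank_eq_finrank_span_cols.symm
  refine ⟨.of fun i l => (b l : m → F) i, .of fun l j => b.repr ⟨B.col j, hcol j⟩ l, ?_⟩
  ext i j
  have := congr_arg (fun v : V => (v : m → F) i) (b.sum_repr ⟨B.col j, hcol j⟩)
  simp only [Submodule.coe_sum, Submodule.coe_smul, Finset.sum_apply, Pi.smul_apply,
    smul_eq_mul] at this
  rw [mul_apply, ← col_apply B j i, ← this]
  simp only [of_apply, mul_comm]

theorem exists_eq_mul_of_rank_le (B : Matrix m n F) {r : ℕ} (h : B.rank ≤ r) :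
    ∃ (P : Matrix m (Fin r) F) (Q : Matrix (Fin r) n F), B = P * Q := by
  obtain ⟨t, rfl⟩ := Nat.exists_eq_add_of_le h
  obtain ⟨P, Q, hPQ⟩ := B.exists_eq_mul_rank
  refine ⟨.of fun i => Fin.append (P i) 0, .of fun l j => Fin.append (Q · j) 0 l, ?_⟩
  ext i j
  simp [hPQ, mul_apply, Fin.sum_univ_add]

end Matrix

theorem card_filter_card_le_mul_seven_pow_le (κ : Type*) [Fintype κ] (m : ℕ) :
    #{T : Finset κ | #T ≤ m} * 7 ^ (Fintype.card κ - m) ≤ 8 ^ Fintype.card κ :=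
  calc #{T : Finset κ | #T ≤ m} * 7 ^ (Fintype.card κ - m)
      = ∑ T : Finset κ with #T ≤ m, 7 ^ (Fintype.card κ - m) := by rw [sum_const, smul_eq_mul]
    _ ≤ ∑ T : Finset κ with #T ≤ m, 7 ^ (Fintype.card κ - #T) :=
        sum_le_sum fun T hT => Nat.pow_le_pow_right (by norm_num) (by grind)
    _ ≤ ∑ T : Finset κ, 1 ^ #T * 7 ^ (#(univ : Finset κ) - #T) := by
        simp only [one_pow, one_mul, card_univ]
        exact sum_le_sum_of_subset (filter_subset _ _)
    _ = 8 ^ Fintype.card κ := by rw [← powerset_univ, sum_pow_mul_eq_add_pow, card_univ]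

theorem card_filter_card_le_pow_eight_lt (κ : Type*) [Fintype κ] {m : ℕ}
    (hκ : 0 < Fintype.card κ) (hm : 8 * m ≤ Fintype.card κ) :
    #{T : Finset κ | #T ≤ m} ^ 8 < 32 ^ Fintype.card κ := by
  set k := Fintype.card κ
  set S := #{T : Finset κ | #T ≤ m}
  have hS : 0 < S := card_pos.2 ⟨∅, by simp⟩
  -- `524288 = 2 ^ 19 < 7 ^ 7 = 823543` and `8 ^ 8 = 32 * 2 ^ 19`
  refine lt_of_mul_lt_mul_right (a := 524288 ^ k) ?_ (Nat.zero_le _)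
  calc S ^ 8 * 524288 ^ k < S ^ 8 * 823543 ^ k := by gcongr; norm_num
    _ = S ^ 8 * 7 ^ (7 * k) := by rw [pow_mul]; norm_num
    _ ≤ S ^ 8 * 7 ^ (8 * (k - m)) := by gcongr S ^ 8 * 7 ^ ?_ <;> omega
    _ = (S * 7 ^ (k - m)) ^ 8 := by ring
    _ ≤ (8 ^ k) ^ 8 := by gcongr; exact card_filter_card_le_mul_seven_pow_le κ m
    _ = 32 ^ k * 524288 ^ k := by rw [← pow_mul, ← mul_pow, mul_comm, pow_mul]; norm_num

theorem card_filter_card_ne_zero_le {κ V : Type*} [Fintype κ] [DecidableEq κ] [Fintype V]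
    [DecidableEq V] [Zero V] (m : ℕ) :
    #{g : κ → V | #{j | g j ≠ 0} ≤ m} ≤ #{T : Finset κ | #T ≤ m} * Fintype.card V ^ m := by
  let supportedIn (T : Finset κ) : Finset (κ → V) :=
    Fintype.piFinset fun j => if j ∈ T then univ else {0}
  have hsub : ({g : κ → V | #{j | g j ≠ 0} ≤ m} : Finset _) ⊆
      ({T : Finset κ | #T ≤ m} : Finset _).biUnion supportedIn := by
    intro g hg
    simp only [mem_filter, mem_univ, true_and] at hg
    simp only [mem_biUnion, mem_filter, mem_univ, true_and]
    refine ⟨_, hg, Fintype.mem_piFinset.2 fun j => ?_⟩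
    split_ifs with hj <;> simp_all
  have hcard (T : Finset κ) (hT : #T ≤ m) : #(supportedIn T) ≤ Fintype.card V ^ m := by
    simp only [supportedIn, Fintype.card_piFinset, apply_ite card, card_univ, card_singleton,
      Fintype.prod_ite_mem, prod_const]
    exact Nat.pow_le_pow_right Fintype.card_pos hT
  calc #{g : κ → V | #{j | g j ≠ 0} ≤ m}
      ≤ ∑ T : Finset κ with #T ≤ m, #(supportedIn T) := (card_le_card hsub).trans card_biUnion_le
    _ ≤ ∑ T : Finset κ with #T ≤ m, Fintype.card V ^ m :=
        sum_le_sum fun T hT => hcard T (mem_filter.1 hT).2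
    _ = #{T : Finset κ | #T ≤ m} * Fintype.card V ^ m := by rw [sum_const, smul_eq_mul]

theorem Fintype.card_matrix (m n R : Type*) [Fintype m] [DecidableEq m] [Fintype n]
    [DecidableEq n] [Fintype R] :
    Fintype.card (Matrix m n R) = Fintype.card R ^ (Fintype.card m * Fintype.card n) := by
  change Fintype.card (m → n → R) = _
  rw [Fintype.card_fun, Fintype.card_fun, ← pow_mul, mul_comm]

theorem card_filter_card_nonzero_blocks_le {F κ β : Type*} [Zero F] [Fintype F] [DecidableEq F]
    [Fintype κ] [DecidableEq κ] [Fintype β] [DecidableEq β] (m : ℕ) :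
    #{C : Matrix (κ × β) (κ × β) F | ∀ i, #{j | ∃ a b, C (i, a) (j, b) ≠ 0} ≤ m} ≤
      (#{T : Finset κ | #T ≤ m} * Fintype.card F ^ (Fintype.card β * Fintype.card β * m)) ^
        Fintype.card κ := by
  have hblock (C : Matrix (κ × β) (κ × β) F) (i : κ) :
      ({j | ∃ a b, C (i, a) (j, b) ≠ 0} : Finset κ) =
        ({j | (comp κ κ β β F).symm C i j ≠ 0} : Finset κ) :=
    filter_congr fun j _ => by simp [← Matrix.ext_iff]
  rw [card_equiv (comp κ κ β β F).symm (t := Fintype.piFinset fun _ =>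
    {g : κ → Matrix β β F | #{j | g j ≠ 0} ≤ m}) fun C => by
      simp only [mem_filter, mem_univ, true_and, Fintype.mem_piFinset, hblock]
      congr!]
  rw [Fintype.card_piFinset, prod_const, card_univ, pow_mul, ← Fintype.card_matrix]
  exact Nat.pow_le_pow_left (card_filter_card_ne_zero_le m) _

theorem exists_forall_ne_mul_add {F κ β : Type*} [Semiring F] [Fintype F] [DecidableEq F]
    [Fintype κ] [DecidableEq κ] [Fintype β] [DecidableEq β] (r m : ℕ)
    (hcount : Fintype.card F ^ (2 * (Fintype.card κ * Fintype.card β) * r) *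
        (#{T : Finset κ | #T ≤ m} * Fintype.card F ^ (Fintype.card β * Fintype.card β * m)) ^
          Fintype.card κ < Fintype.card F ^ ((Fintype.card κ * Fintype.card β) ^ 2)) :
    ∃ A : Matrix (κ × β) (κ × β) F, ∀ (P : Matrix (κ × β) (Fin r) F) (Q : Matrix (Fin r) (κ × β) F)
      (C : Matrix (κ × β) (κ × β) F), (∀ i, #{j | ∃ a b, C (i, a) (j, b) ≠ 0} ≤ m) →
        A ≠ P * Q + C := by
  let sparse : Finset (Matrix (κ × β) (κ × β) F) :=
    {C | ∀ i, #{j | ∃ a b, C (i, a) (j, b) ≠ 0} ≤ m}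
  let decomposable := (univ ×ˢ univ ×ˢ sparse).image fun x :
    Matrix (κ × β) (Fin r) F × Matrix (Fin r) (κ × β) F × Matrix (κ × β) (κ × β) F =>
      x.1 * x.2.1 + x.2.2
  have hlt : #decomposable < #(univ : Finset (Matrix (κ × β) (κ × β) F)) := by
    refine card_image_le.trans_lt (lt_of_le_of_lt ?_ hcount) |>.trans_eq ?_
    · rw [card_product, card_product, card_univ, card_univ, ← mul_assoc]
      refine Nat.mul_le_mul (le_of_eq ?_) (card_filter_card_nonzero_blocks_le m)
      simp only [Fintype.card_matrix, Fintype.card_prod, Fintype.card_fin, ← pow_add]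
      ring_nf
    · simp only [card_univ, Fintype.card_matrix, Fintype.card_prod, sq]
  obtain ⟨A, -, hA⟩ := exists_mem_notMem_of_card_lt_card hlt
  refine ⟨A, fun P Q C hC hPQC => hA ?_⟩
  exact mem_image.2 ⟨(P, Q, C), by simp [sparse, hC], hPQC.symm⟩

theorem pow_mul_pow_lt_pow_sq {q S k n r m : ℕ} (hq : 2 ≤ q) (hk : 0 < k) (hn : 0 < n)
    (hr : 8 * r ≤ k * n) (hm : 8 * m ≤ k) (hS : S ^ 8 < 32 ^ k) :
    q ^ (2 * (k * n) * r) * (S * q ^ (n * n * m)) ^ k < q ^ ((k * n) ^ 2) := by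
  have hexp : 5 * (k * k) + (16 * (k * n) * r + 8 * (n * n * m) * k) ≤ 8 * (k * n) ^ 2 := by
    have h1 : 16 * (k * n) * r ≤ 2 * (k * n) ^ 2 := by nlinarith
    have h2 : 8 * (n * n * m) * k ≤ (k * n) ^ 2 := by nlinarith
    have h3 : k * k ≤ (k * n) ^ 2 := by
      nlinarith [Nat.mul_le_mul (le_refl (k * k)) (Nat.mul_le_mul hn hn)]
    omega
  refine lt_of_pow_lt_pow_left₀ 8 (Nat.zero_le _) ?_
  calc (q ^ (2 * (k * n) * r) * (S * q ^ (n * n * m)) ^ k) ^ 8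
      = (S ^ 8) ^ k * q ^ (16 * (k * n) * r + 8 * (n * n * m) * k) := by ring
    _ < (2 ^ 5) ^ k ^ 2 * q ^ (16 * (k * n) * r + 8 * (n * n * m) * k) := by
        rw [sq, pow_mul]
        gcongr
        exact hS.trans_eq (by norm_num)
    _ ≤ q ^ (5 * (k * k)) * q ^ (16 * (k * n) * r + 8 * (n * n * m) * k) := by
        rw [← pow_mul, sq]
        gcongr
    _ ≤ (q ^ ((k * n) ^ 2)) ^ 8 := by
        rw [← pow_add, ← pow_mul, mul_comm _ 8]
        exact Nat.pow_le_pow_right (by omega) hexp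

theorem Nat.le_div_of_cast_le_mul {x y d : ℕ} {ε : ℝ} (hd : 0 < d) (hε : ε ≤ 1 / d)
    (h : (x : ℝ) ≤ ε * y) : x ≤ y / d := by
  rw [Nat.le_div_iff_mul_le hd, ← Nat.cast_le (α := ℝ), Nat.cast_mul]
  calc (x : ℝ) * d ≤ ε * y * d := by gcongr
    _ ≤ 1 / d * y * d := by gcongr
    _ = y := by field_simp

theorem stmt_6_general {F : Type*} [Field F] [Fintype F] [DecidableEq F]
    (ε : ℝ) (hε' : ε ≤ 1 / 8) (n k : ℕ) (hn : 0 < n) (hk : 0 < k) :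
    ∃ A : Matrix (Fin k × Fin n) (Fin k × Fin n) F,
      IsBlockRigidMatrix A (ε * (n * k)) (ε * k) := by
  have hε8 : ε ≤ 1 / (8 : ℕ) := by exact_mod_cast hε'
  have hsubsets := card_filter_card_le_pow_eight_lt (Fin k) (m := k / 8)
    (by simpa using hk) (by simpa using Nat.mul_div_le k 8)
  obtain ⟨A, hA⟩ := exists_forall_ne_mul_add (F := F) (κ := Fin k) (β := Fin n) (n * k / 8) (k / 8)
    (by
      simp only [Fintype.card_fin] at hsubsets ⊢
      exact pow_mul_pow_lt_pow_sq Fintype.one_lt_card hk hn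
        ((Nat.mul_div_le _ _).trans_eq (mul_comm _ _)) (Nat.mul_div_le _ _) hsubsets)
  refine ⟨A, fun ⟨B, C, hABC, hB, hC⟩ => ?_⟩
  obtain ⟨P, Q, rfl⟩ := B.exists_eq_mul_of_rank_le
    (Nat.le_div_of_cast_le_mul (by norm_num) hε8 (by exact_mod_cast hB))
  exact hA P Q C (fun i => Nat.le_div_of_cast_le_mul (by norm_num) hε8 (by convert hC i)) hABC

theorem stmt_6 {F : Type*} [Field F] [Fintype F] [DecidableEq F]
    (ε : ℝ) (hε : 0 < ε) (hε' : ε ≤ 1 / 8) (n k : ℕ) (hn : 0 < n) (hk : 0 < k) :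
    ∃ A : Matrix (Fin k × Fin n) (Fin k × Fin n) F,
      IsBlockRigidMatrix A (ε * (n * k)) (ε * k) :=
  stmt_6_general ε hε' n k hn hk
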